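/- arXiv:1302.2512 — 3 statements merged into one kernel-verified Lean document; each statement's English description precedes it below -/
import Mathlib

section
/- Randomized Boolean functions cannot beat deterministic ones: for any random variable U taking values in \{0,1\} such that U \to X^n \to Y^n is a Markov chain, there exists a deterministic Boolean function b: \{0,1\}^n \to \{0,1\} with I(b(X^n); Y^n) \ge I(U; Y^n). -/
open Finset

/-- `f2 x = -x log₂ x`, the summand of base-2 Shannon entropy. -/
noncomputable def f2 (x : ℝ) : ℝ := -x * Real.logb 2 x

/-- Binary entropy function `H(α)` (base 2). -/
noncomputable def binEnt (α : ℝ) : ℝ := f2 α + f2 (1 - α)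

/-- Joint pmf of `(Xⁿ, Yⁿ)` where `Xⁿ` is i.i.d. Bernoulli(1/2) and
`Yⁿ = Xⁿ ⊕ Zⁿ` with `Zⁿ` i.i.d. Bernoulli(α) (a memoryless BSC(α)). -/
noncomputable def jointP (n : ℕ) (α : ℝ) (x y : Fin n → Bool) : ℝ :=
  (1/2)^n * ∏ i, (if x i = y i then 1 - α else α)

/-- `Pr{b(Xⁿ) = u, Yⁿ = y}`. -/
noncomputable def pBY (n : ℕ) (α : ℝ) (b : (Fin n → Bool) → Bool) (u : Bool)
    (y : Fin n → Bool) : ℝ :=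
  ∑ x : Fin n → Bool, if b x = u then jointP n α x y else 0

/-- `Pr{b(Xⁿ) = u}` for `Xⁿ` uniform on `{0,1}ⁿ`. -/
noncomputable def pB (n : ℕ) (b : (Fin n → Bool) → Bool) (u : Bool) : ℝ :=
  ∑ x : Fin n → Bool, if b x = u then (1/2)^n else 0

/-- `H(b(Xⁿ))`, the entropy of the Boolean function's output. -/
noncomputable def HB (n : ℕ) (b : (Fin n → Bool) → Bool) : ℝ :=
  ∑ u : Bool, f2 (pB n b u)

/-- `Pr{b(Xⁿ) = 0 ∣ Yⁿ = y}` (note `Pr{Yⁿ = y} = 2⁻ⁿ` since `Yⁿ` is uniform;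
`0` is encoded as `false`). -/
noncomputable def condP (n : ℕ) (α : ℝ) (b : (Fin n → Bool) → Bool)
    (y : Fin n → Bool) : ℝ :=
  (2:ℝ)^n * pBY n α b false y

/-- The conditional entropy `H(b(Xⁿ) ∣ Yⁿ)`. -/
noncomputable def condHB (n : ℕ) (α : ℝ) (b : (Fin n → Bool) → Bool) : ℝ :=
  ∑ y : Fin n → Bool, (1/2)^n * ∑ u : Bool, f2 ((2:ℝ)^n * pBY n α b u y)

/-- The mutual information `I(b(Xⁿ); Yⁿ) = H(b(Xⁿ)) - H(b(Xⁿ) ∣ Yⁿ)`. -/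
noncomputable def MI (n : ℕ) (α : ℝ) (b : (Fin n → Bool) → Bool) : ℝ :=
  HB n b - condHB n α b

/-- `Pr{U = u ∣ Xⁿ = x}` for a randomized bit `U` with `r x = Pr{U = 0 ∣ Xⁿ = x}`
(`0` encoded as `false`). -/
noncomputable def wgt {n : ℕ} (r : (Fin n → Bool) → ℝ) (u : Bool)
    (x : Fin n → Bool) : ℝ :=
  if u then 1 - r x else r x

/-- `Pr{U = u}`. -/
noncomputable def pU (n : ℕ) (r : (Fin n → Bool) → ℝ) (u : Bool) : ℝ :=
  ∑ x : Fin n → Bool, (1/2)^n * wgt r u x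

/-- `Pr{U = u, Yⁿ = y}` for the Markov chain `U → Xⁿ → Yⁿ`. -/
noncomputable def pUY (n : ℕ) (α : ℝ) (r : (Fin n → Bool) → ℝ) (u : Bool)
    (y : Fin n → Bool) : ℝ :=
  ∑ x : Fin n → Bool, jointP n α x y * wgt r u x

/-- `I(U; Yⁿ) = H(U) - H(U ∣ Yⁿ)`. -/
noncomputable def MIr (n : ℕ) (α : ℝ) (r : (Fin n → Bool) → ℝ) : ℝ :=
  (∑ u : Bool, f2 (pU n r u)) -
    ∑ y : Fin n → Bool, (1/2)^n * ∑ u : Bool, f2 ((2:ℝ)^n * pUY n α r u y)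

/-!
For a fixed input distribution, mutual information is convex in the channel. Here
`I(U; Yⁿ) log 2 = ∑ᵤ ∑_y P(u, y) log (P(u, y) / (P(u) 2⁻ⁿ))` (`Yⁿ` is uniform) is a sum of
perspectives `(a, b) ↦ b φ(a / b)` of the convex `φ x = x log x`, evaluated at quantities affine
in `r x = Pr{U = 0 ∣ Xⁿ = x}`. So `r ↦ I(U; Yⁿ)` is convex on the cube `[0, 1]^{{0,1}ⁿ}` and is
maximized at a vertex, i.e. at a deterministic `U = b(Xⁿ)`.
-/

open Real

/-- At `b = 0` this is `0`, the correct value only when also `a = 0`; hence the hypotheses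
`b = 0 → a = 0` below. -/
noncomputable def perspective (f : ℝ → ℝ) (a b : ℝ) : ℝ := b * f (a / b)

lemma perspective_mul_mul (f : ℝ → ℝ) (t a b : ℝ) :
    perspective f (t * a) (t * b) = t * perspective f a b := by
  rcases eq_or_ne t 0 with rfl | ht
  · simp [perspective]
  · simp only [perspective, mul_div_mul_left _ _ ht, mul_assoc]

theorem ConvexOn.perspective_le {f : ℝ → ℝ} (hf : ConvexOn ℝ (Set.Ici 0) f)
    {a₀ a₁ b₀ b₁ s t : ℝ} (ha₀ : 0 ≤ a₀) (ha₁ : 0 ≤ a₁) (hb₀ : 0 ≤ b₀) (hb₁ : 0 ≤ b₁)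
    (h₀ : b₀ = 0 → a₀ = 0) (h₁ : b₁ = 0 → a₁ = 0) (hs : 0 ≤ s) (ht : 0 ≤ t) (hst : s + t = 1) :
    perspective f (s * a₀ + t * a₁) (s * b₀ + t * b₁) ≤
      s * perspective f a₀ b₀ + t * perspective f a₁ b₁ := by
  rcases hb₀.eq_or_lt with rfl | hb₀
  · simp only [h₀ rfl, mul_zero, zero_add, perspective_mul_mul]
    simp [perspective]
  rcases hb₁.eq_or_lt with rfl | hb₁
  · simp only [h₁ rfl, mul_zero, add_zero, perspective_mul_mul]
    simp [perspective]
  set B := s * b₀ + t * b₁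
  have hB : 0 < B := by
    rcases hs.eq_or_lt with rfl | hs
    · simp only [B, zero_mul, zero_add]; nlinarith
    · positivity
  have key := hf.2 (show a₀ / b₀ ∈ Set.Ici 0 from div_nonneg ha₀ hb₀.le)
    (show a₁ / b₁ ∈ Set.Ici 0 from div_nonneg ha₁ hb₁.le)
    (show 0 ≤ s * b₀ / B by positivity) (show 0 ≤ t * b₁ / B by positivity)
    (by rw [← add_div, div_self hB.ne'])
  have harg : (s * b₀ / B) • (a₀ / b₀) + (t * b₁ / B) • (a₁ / b₁) = (s * a₀ + t * a₁) / B := by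
    simp only [smul_eq_mul]; field_simp
  rw [harg, smul_eq_mul, smul_eq_mul] at key
  calc B * f ((s * a₀ + t * a₁) / B)
      ≤ B * (s * b₀ / B * f (a₀ / b₀) + t * b₁ / B * f (a₁ / b₁)) := by gcongr
    _ = s * perspective f a₀ b₀ + t * perspective f a₁ b₁ := by
      simp only [perspective]; field_simp

lemma perspective_mul_log {a b : ℝ} (hb : b ≠ 0) :
    perspective (fun x => x * log x) a b = a * log (a / b) := by
  simp only [perspective]
  rw [← mul_assoc, mul_div_cancel₀ a hb]

lemma sum_perspective_mul_log {ι : Type*} [Fintype ι] {a : ι → ℝ} (ha : ∀ i, 0 ≤ a i)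
    {k : ℝ} (hk : 0 < k) :
    ∑ i, perspective (fun x => x * log x) (a i) (k⁻¹ * ∑ j, a j) =
      ∑ i, a i * log (k * a i) - (∑ i, a i) * log (∑ i, a i) := by
  rcases (sum_nonneg fun i _ => ha i).eq_or_lt with hp | hp
  · have hzero : ∀ i, a i = 0 := fun i =>
      (sum_eq_zero_iff_of_nonneg fun i _ => ha i).1 hp.symm i (mem_univ i)
    simp [hzero, perspective]
  rw [sum_mul, ← sum_sub_distrib]
  refine sum_congr rfl fun i _ => ?_
  rcases (ha i).eq_or_lt with hi | hi
  · simp [← hi, perspective]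
  have hdiv : a i / (k⁻¹ * ∑ j, a j) = k * a i / ∑ j, a j := by field_simp
  rw [perspective_mul_log (by positivity), hdiv, log_div (by positivity) hp.ne']
  ring

section BSC

variable {n : ℕ} {α : ℝ} {r : (Fin n → Bool) → ℝ}

lemma jointP_nonneg (h₀ : 0 ≤ α) (h₁ : α ≤ 1) (x y : Fin n → Bool) : 0 ≤ jointP n α x y :=
  mul_nonneg (by positivity) (prod_nonneg fun i _ => by split <;> linarith)

lemma sum_jointP_right (x : Fin n → Bool) : ∑ y, jointP n α x y = (1/2)^n := by
  have hrow : ∀ i, ∑ b : Bool, (if x i = b then 1 - α else α) = 1 := fun i => by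
    cases x i <;> simp
  simp only [jointP, ← mul_sum]
  rw [← Fintype.prod_sum fun i b => if x i = b then 1 - α else α,
    prod_congr rfl fun i _ => hrow i, prod_const_one, mul_one]

lemma wgt_nonneg (hr : ∀ x, r x ∈ Set.Icc 0 1) (u : Bool) (x : Fin n → Bool) :
    0 ≤ wgt r u x := by
  obtain ⟨h₀, h₁⟩ := hr x
  cases u <;> simp [wgt] <;> linarith

lemma pU_nonneg (hr : ∀ x, r x ∈ Set.Icc 0 1) (u : Bool) : 0 ≤ pU n r u :=
  sum_nonneg fun x _ => mul_nonneg (by positivity) (wgt_nonneg hr u x)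

lemma pUY_nonneg (h₀ : 0 ≤ α) (h₁ : α ≤ 1) (hr : ∀ x, r x ∈ Set.Icc 0 1) (u : Bool)
    (y : Fin n → Bool) : 0 ≤ pUY n α r u y :=
  sum_nonneg fun x _ => mul_nonneg (jointP_nonneg h₀ h₁ x y) (wgt_nonneg hr u x)

lemma sum_pUY_right (u : Bool) : ∑ y, pUY n α r u y = pU n r u := by
  unfold pUY pU
  rw [sum_comm]
  exact sum_congr rfl fun x _ => by rw [← sum_mul, sum_jointP_right]

lemma pUY_eq_zero_of_pU_eq_zero (h₀ : 0 ≤ α) (h₁ : α ≤ 1) (hr : ∀ x, r x ∈ Set.Icc 0 1)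
    {u : Bool} (hu : pU n r u = 0) (y : Fin n → Bool) : pUY n α r u y = 0 := by
  rw [← sum_pUY_right (α := α), sum_eq_zero_iff_of_nonneg fun y _ =>
    pUY_nonneg h₀ h₁ hr u y] at hu
  exact hu y (mem_univ y)

lemma f2_mul_log_two (x : ℝ) : f2 x * log 2 = -(x * log x) := by
  unfold f2 logb
  field_simp

theorem MIr_mul_log_two (h₀ : 0 ≤ α) (h₁ : α ≤ 1) (hr : ∀ x, r x ∈ Set.Icc 0 1) :
    MIr n α r * log 2 =
      ∑ u, ∑ y, perspective (fun x => x * log x) (pUY n α r u y) ((2^n)⁻¹ * pU n r u) := by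
  have hk : (0:ℝ) < 2^n := by positivity
  have hcond : ∀ a : ℝ, (1/2)^n * f2 (2^n * a) * log 2 = -(a * log (2^n * a)) := fun a => by
    rw [mul_assoc, f2_mul_log_two, one_div_pow]
    field_simp
  calc MIr n α r * log 2
      = ∑ u, (∑ y, pUY n α r u y * log (2^n * pUY n α r u y) - pU n r u * log (pU n r u)) := by
        simp only [MIr, sub_mul, sum_mul, mul_sum, f2_mul_log_two, hcond,
          sum_neg_distrib, sum_sub_distrib]
        rw [sum_comm]
        ring
    _ = _ := by
        refine sum_congr rfl fun u _ => ?_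
        rw [← sum_pUY_right (α := α),
          sum_perspective_mul_log (fun y => pUY_nonneg h₀ h₁ hr u y) hk]

end BSC

section Convexity

variable {n : ℕ} {α : ℝ} {r₀ r₁ : (Fin n → Bool) → ℝ} {s t : ℝ}

lemma wgt_add_smul (hst : s + t = 1) (u : Bool) (x : Fin n → Bool) :
    wgt (s • r₀ + t • r₁) u x = s * wgt r₀ u x + t * wgt r₁ u x := by
  cases u
  · simp [wgt]
  · simp only [wgt, Pi.add_apply, Pi.smul_apply, smul_eq_mul, if_true]
    linear_combination -hst

lemma pU_add_smul (hst : s + t = 1) (u : Bool) :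
    pU n (s • r₀ + t • r₁) u = s * pU n r₀ u + t * pU n r₁ u := by
  simp only [pU, wgt_add_smul hst, mul_sum, ← sum_add_distrib]
  exact sum_congr rfl fun x _ => by ring

lemma pUY_add_smul (hst : s + t = 1) (u : Bool) (y : Fin n → Bool) :
    pUY n α (s • r₀ + t • r₁) u y = s * pUY n α r₀ u y + t * pUY n α r₁ u y := by
  simp only [pUY, wgt_add_smul hst, mul_sum, ← sum_add_distrib]
  exact sum_congr rfl fun x _ => by ring

theorem convexOn_MIr (h₀ : 0 ≤ α) (h₁ : α ≤ 1) :
    ConvexOn ℝ (Set.univ.pi fun _ => Set.Icc 0 1) (MIr n α) := by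
  refine ⟨convex_pi fun _ _ => convex_Icc 0 1, fun r₀ hr₀ r₁ hr₁ s t hs ht hst => ?_⟩
  simp only [Set.mem_pi, Set.mem_univ, true_implies] at hr₀ hr₁
  have hzero {r : (Fin n → Bool) → ℝ} (hr : ∀ x, r x ∈ Set.Icc 0 1) (u : Bool)
      (y : Fin n → Bool) (hu : (2^n)⁻¹ * pU n r u = 0) : pUY n α r u y = 0 :=
    pUY_eq_zero_of_pU_eq_zero h₀ h₁ hr (by simpa using hu) y
  have hr : ∀ x, (s • r₀ + t • r₁) x ∈ Set.Icc 0 1 := fun x =>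
    convex_Icc (0:ℝ) 1 (hr₀ x) (hr₁ x) hs ht hst
  rw [smul_eq_mul, smul_eq_mul, ← mul_le_mul_iff_left₀ (log_pos one_lt_two), add_mul,
    mul_assoc, mul_assoc, MIr_mul_log_two h₀ h₁ hr, MIr_mul_log_two h₀ h₁ hr₀,
    MIr_mul_log_two h₀ h₁ hr₁]
  simp only [mul_sum, ← sum_add_distrib, pU_add_smul hst, pUY_add_smul hst, mul_add,
    mul_left_comm _ s, mul_left_comm _ t]
  gcongr with u _ y _
  exact convexOn_mul_log.perspective_le (pUY_nonneg h₀ h₁ hr₀ u y)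
    (pUY_nonneg h₀ h₁ hr₁ u y) (mul_nonneg (by positivity) (pU_nonneg hr₀ u))
    (mul_nonneg (by positivity) (pU_nonneg hr₁ u)) (hzero hr₀ u y) (hzero hr₁ u y)
    hs ht hst

end Convexity

lemma MIr_ite {n : ℕ} (α : ℝ) (b : (Fin n → Bool) → Bool) :
    MIr n α (fun x => if b x then 0 else 1) = MI n α b := by
  have hwgt (u : Bool) (x : Fin n → Bool) :
      wgt (fun x => if b x then 0 else 1) u x = if b x = u then 1 else 0 := by
    cases h : b x <;> cases u <;> simp [wgt, h]
  have hpU (u : Bool) : pU n (fun x => if b x then 0 else 1) u = pB n b u := by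
    simp only [pU, pB, hwgt, mul_ite, mul_one, mul_zero]
  have hpUY (u : Bool) (y : Fin n → Bool) :
      pUY n α (fun x => if b x then 0 else 1) u y = pBY n α b u y := by
    simp only [pUY, pBY, hwgt, mul_ite, mul_one, mul_zero]
  simp only [MIr, MI, HB, condHB, hpU, hpUY]

lemma convexHull_pi_zero_one (ι : Type*) [Finite ι] :
    convexHull ℝ (Set.univ.pi fun _ : ι => ({0, 1} : Set ℝ)) =
      Set.univ.pi fun _ => Set.Icc 0 1 := by
  rw [convexHull_pi, convexHull_pair, segment_eq_Icc zero_le_one]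

/-- Randomized Boolean functions cannot beat deterministic ones: for any binary `U`
with `U → Xⁿ → Yⁿ` a Markov chain (described by `r x = Pr{U = 0 ∣ Xⁿ = x}`), there
is a deterministic `b` with `I(b(Xⁿ); Yⁿ) ≥ I(U; Yⁿ)`. -/
theorem randomized_no_better (n : ℕ) (α : ℝ) (hα : α ∈ Set.Icc (0:ℝ) (1/2))
    (r : (Fin n → Bool) → ℝ) (hr : ∀ x, r x ∈ Set.Icc (0:ℝ) 1) :
    ∃ b : (Fin n → Bool) → Bool, MI n α b ≥ MIr n α r := by
  have hr_mem : r ∈ convexHull ℝ (Set.univ.pi fun _ => ({0, 1} : Set ℝ)) := by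
    rw [convexHull_pi_zero_one]
    exact fun x _ => hr x
  obtain ⟨r', hr', hle⟩ := (convexOn_MIr hα.1 (by linarith [hα.2])).exists_ge_of_mem_convexHull
    ((subset_convexHull ℝ _).trans (convexHull_pi_zero_one _).le) hr_mem
  have hr'_ite : r' = fun x => if decide (r' x = 0) then 0 else 1 := funext fun x => by
    obtain h | h : r' x = 0 ∨ r' x = 1 := hr' x trivial <;> simp [h]
  refine ⟨fun x => decide (r' x = 0), ?_⟩
  rwa [ge_iff_le, ← MIr_ite, ← hr'_ite]
end

section
/- The self-similarity relation implies that the gap halves under doubling: (1/2)[T_\alpha(2p) - f(2p) H(\alpha)] = T_\alpha(p) - f(p) H(\alpha) for all p \in [0,1/2]. Consequently, to prove T_\alpha(p) \ge f(p) H(\alpha) for all p \in [0,1], it suffices to prove it for p \in [1/2, 1]. -/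
open Finset

/-- The numeric value of `x ∈ {0,1}ⁿ` with the first coordinate most significant;
`x ≺_L x'` in the lexicographic order iff `vecVal x < vecVal x'`. -/
def vecVal {n : ℕ} (x : Fin n → Bool) : ℕ :=
  ∑ i : Fin n, if x i then 2 ^ (n - 1 - i.val) else 0

/-- The unique lex Boolean function on `n` inputs whose preimage of `0` (= `false`)
is the initial segment of size `k` of the lexicographic order on `{0,1}ⁿ`. -/
def lexFun (n k : ℕ) : (Fin n → Bool) → Bool := fun x => decide (k ≤ vecVal x)

/-- `T_α` at the dyadic rational `k/2ⁿ`: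
`T_α(k/2ⁿ) = E_{Yⁿ} f(Pr{b(Xⁿ)=0 ∣ Yⁿ})` where `b` is the lex function on `n`
inputs with `Pr{b(Xⁿ)=0} = k/2ⁿ`. -/
noncomputable def Tdy (α : ℝ) (n k : ℕ) : ℝ :=
  ∑ y : Fin n → Bool, (1/2)^n * f2 (condP n α (lexFun n k) y)


/-! Condition on the first output bit. For `k ≤ 2ⁿ` the lex function on `n + 1` inputs
is `1` whenever the first input is `1`, so the posterior of `0` given `(c, y)` is the
`n`-input posterior given `y` times `1 - α` or `α`. Since `f(pq) = p f(q) + q f(p)` and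
the posteriors average to `k / 2ⁿ`, this yields
`T(k / 2ⁿ⁺¹) = ½ T(k / 2ⁿ) + (k / 2ⁿ⁺¹) H(α)`, which extends from the dyadics to `[0, 1/2]`
by continuity; with `f(2p) = 2 f(p) - 2p` it is exactly the halving of the gap `T - f H`.
Doubling finitely often moves any `p ∈ (0, 1/2)` into `[1/2, 1]` without changing the
sign of the gap. -/

open Filter Topology

lemma f2_mul (a b : ℝ) : f2 (a * b) = a * f2 b + b * f2 a := by
  rcases eq_or_ne a 0 with rfl | ha
  · simp [f2]
  rcases eq_or_ne b 0 with rfl | hb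
  · simp [f2]
  simp only [f2, Real.logb, Real.log_mul ha hb]
  ring

lemma f2_two_mul (p : ℝ) : f2 (2 * p) = 2 * f2 p - 2 * p := by
  rcases eq_or_ne p 0 with rfl | hp
  · simp [f2]
  rw [f2, f2, Real.logb_mul two_ne_zero hp, Real.logb_self_eq_one one_lt_two]
  ring

lemma sum_pi_fin_succ {β M : Type*} [Fintype β] [AddCommMonoid M] {n : ℕ}
    (g : (Fin (n + 1) → β) → M) :
    ∑ z, g z = ∑ b, ∑ x : Fin n → β, g (Fin.cons b x) := by
  rw [← Fintype.sum_prod_type']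
  exact (Fintype.sum_equiv (Fin.consEquiv fun _ => β) _ _ fun _ => rfl).symm

lemma vecVal_cons {n : ℕ} (b : Bool) (x : Fin n → Bool) :
    vecVal (Fin.cons b x : Fin (n + 1) → Bool) = (if b then 2 ^ n else 0) + vecVal x := by
  simp only [vecVal, Fin.sum_univ_succ, Fin.cons_zero, Fin.cons_succ, Fin.val_succ,
    Fin.val_zero, Nat.add_sub_cancel, Nat.sub_zero]
  congr 1
  refine Finset.sum_congr rfl fun i _ => ?_
  rw [show n - (i.val + 1) = n - 1 - i.val by omega]

lemma card_vecVal_lt (n k : ℕ) : #{x : Fin n → Bool | vecVal x < k} = min k (2 ^ n) := by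
  induction n generalizing k with
  | zero => cases k <;> simp [vecVal]
  | succ n ih =>
    rw [card_filter, sum_pi_fin_succ, Fintype.sum_bool]
    simp only [vecVal_cons, if_true, Bool.false_eq_true, if_false, zero_add]
    have hshift : ∀ x : Fin n → Bool, (2 ^ n + vecVal x < k) ↔ vecVal x < k - 2 ^ n := by
      intro x; omega
    simp only [hshift, ← card_filter, ih, pow_succ]
    omega

lemma sum_prod_bsc {ι : Type*} [Fintype ι] [DecidableEq ι] (α : ℝ) (x : ι → Bool) :
    ∑ y : ι → Bool, ∏ i, (if x i = y i then 1 - α else α) = 1 := by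
  rw [← Fintype.prod_sum fun i b => if x i = b then 1 - α else α]
  refine Finset.prod_eq_one fun i _ => ?_
  cases x i <;> simp

lemma condP_eq_sum (n : ℕ) (α : ℝ) (b : (Fin n → Bool) → Bool) (y : Fin n → Bool) :
    condP n α b y = ∑ x, if b x = false then ∏ i, (if x i = y i then 1 - α else α) else 0 := by
  rw [condP, pBY, mul_sum]
  refine Finset.sum_congr rfl fun x _ => ?_
  split_ifs
  · rw [jointP, ← mul_assoc, ← mul_pow]
    norm_num
  · rw [mul_zero]

lemma lexFun_succ_cons {n k : ℕ} (hk : k ≤ 2 ^ n) (c : Bool) (x : Fin n → Bool) :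
    lexFun (n + 1) k (Fin.cons c x) = (c || lexFun n k x) := by
  cases c
  · simp [lexFun, vecVal_cons]
  · simp [lexFun, vecVal_cons]
    omega

lemma condP_lexFun_cons {n k : ℕ} (α : ℝ) (hk : k ≤ 2 ^ n) (c : Bool) (y : Fin n → Bool) :
    condP (n + 1) α (lexFun (n + 1) k) (Fin.cons c y)
      = (if c then α else 1 - α) * condP n α (lexFun n k) y := by
  simp only [condP_eq_sum, sum_pi_fin_succ, Fintype.sum_bool, lexFun_succ_cons hk,
    Bool.true_or, Bool.false_or, Fin.prod_univ_succ, Fin.cons_zero, Fin.cons_succ, mul_sum]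
  cases c <;> simp [mul_ite]

lemma sum_condP_lexFun (α : ℝ) {n k : ℕ} (hk : k ≤ 2 ^ n) :
    ∑ y, condP n α (lexFun n k) y = k := by
  simp only [condP_eq_sum]
  rw [sum_comm]
  simp only [sum_ite_irrel, sum_const_zero, sum_prod_bsc, sum_boole]
  simp only [lexFun, decide_eq_false_iff_not, not_le, card_vecVal_lt, min_eq_left hk]

lemma Tdy_succ (α : ℝ) {n k : ℕ} (hk : k ≤ 2 ^ n) :
    Tdy α (n + 1) k = 1 / 2 * Tdy α n k + k / 2 ^ (n + 1) * binEnt α := by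
  have hcons : ∀ y : Fin n → Bool,
      ∑ c : Bool, (1 / 2 : ℝ) ^ (n + 1) * f2 (condP (n + 1) α (lexFun (n + 1) k) (Fin.cons c y))
        = 1 / 2 * ((1 / 2) ^ n * f2 (condP n α (lexFun n k) y))
          + (1 / 2) ^ (n + 1) * binEnt α * condP n α (lexFun n k) y := by
    intro y
    simp only [Fintype.sum_bool, condP_lexFun_cons α hk, if_true, Bool.false_eq_true, if_false,
      f2_mul, binEnt, pow_succ]
    ring
  rw [Tdy, sum_pi_fin_succ, sum_comm, Finset.sum_congr rfl fun y _ => hcons y, sum_add_distrib,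
    ← mul_sum, ← Tdy, ← mul_sum, sum_condP_lexFun α hk, div_pow, one_pow]
  ring

lemma Icc_zero_half_subset_closure_dyadic :
    Set.Icc (0 : ℝ) (1 / 2) ⊆ closure {q : ℝ | ∃ n k : ℕ, k ≤ 2 ^ n ∧ q = k / 2 ^ (n + 1)} := by
  rintro p ⟨hp0, hp⟩
  have hlim : Tendsto (fun n : ℕ => (⌊p * 2 ^ (n + 1)⌋₊ : ℝ) / 2 ^ (n + 1)) atTop (𝓝 p) :=
    (tendsto_nat_floor_mul_div_atTop hp0).comp
      ((tendsto_pow_atTop_atTop_of_one_lt one_lt_two).comp (tendsto_add_atTop_nat 1))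
  refine mem_closure_of_tendsto hlim (Eventually.of_forall fun n => ⟨n, _, ?_, rfl⟩)
  refine Nat.floor_le_of_le ?_
  rw [pow_succ]
  push_cast
  nlinarith [pow_pos (two_pos : (0 : ℝ) < 2) n]

lemma self_similarity_of_dyadic {α : ℝ} {Tα : ℝ → ℝ} (hcont : ContinuousOn Tα (Set.Icc 0 1))
    (hdy : ∀ n k : ℕ, k ≤ 2 ^ n → Tα ((k : ℝ) / 2 ^ n) = Tdy α n k) :
    Set.EqOn Tα (fun p => 1 / 2 * Tα (2 * p) + p * binEnt α) (Set.Icc 0 (1 / 2)) := by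
  have hdouble : Set.MapsTo (fun p : ℝ => 2 * p) (Set.Icc 0 (1 / 2)) (Set.Icc 0 1) :=
    fun p ⟨h0, h1⟩ => ⟨by linarith, by linarith⟩
  refine Set.EqOn.of_subset_closure ?_ (hcont.mono (Set.Icc_subset_Icc le_rfl (by norm_num)))
    ?_ ?_ Icc_zero_half_subset_closure_dyadic
  · rintro _ ⟨n, k, hk, rfl⟩
    have hk' : k ≤ 2 ^ (n + 1) := hk.trans (Nat.pow_le_pow_right two_pos n.le_succ)
    have htwice : 2 * ((k : ℝ) / 2 ^ (n + 1)) = k / 2 ^ n := by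
      rw [pow_succ]
      field_simp
    simp only [hdy (n + 1) k hk', htwice, hdy n k hk, Tdy_succ α hk]
  · exact ((hcont.comp (continuousOn_const.mul continuousOn_id) hdouble).const_mul _).add
      (continuousOn_id.mul continuousOn_const)
  · rintro _ ⟨n, k, hk, rfl⟩
    refine ⟨by positivity, ?_⟩
    rw [div_le_iff₀ (by positivity), pow_succ]
    have : (k : ℝ) ≤ 2 ^ n := by exact_mod_cast hk
    linarith

lemma nonneg_of_half_two_mul {g : ℝ → ℝ}
    (hg : ∀ p ∈ Set.Icc (0 : ℝ) (1 / 2), 1 / 2 * g (2 * p) = g p)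
    (hupper : ∀ p ∈ Set.Icc (1 / 2 : ℝ) 1, 0 ≤ g p) : ∀ p ∈ Set.Icc (0 : ℝ) 1, 0 ≤ g p := by
  have hpow : ∀ m : ℕ, ∀ q ∈ Set.Icc (0 : ℝ) 1, 1 / 2 ≤ 2 ^ m * q → 0 ≤ g q := by
    intro m
    induction m with
    | zero => exact fun q hq h => hupper q ⟨by simpa using h, hq.2⟩
    | succ m ih =>
      intro q ⟨hq0, hq1⟩ h
      rcases le_or_gt (1 / 2) q with hge | hlt
      · exact hupper q ⟨hge, hq1⟩
      rw [← hg q ⟨hq0, hlt.le⟩]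
      have := ih (2 * q) ⟨by linarith, by linarith⟩ (by rw [pow_succ] at h; linarith)
      linarith
  intro p hp
  rcases hp.1.eq_or_lt with rfl | hp0
  · have h0 := hg 0 ⟨le_rfl, by norm_num⟩
    rw [mul_zero] at h0
    linarith
  obtain ⟨m, hm⟩ := pow_unbounded_of_one_lt (1 / p) one_lt_two
  exact hpow m p hp (by rw [div_lt_iff₀ hp0] at hm; linarith)

theorem gap_halves_general (α : ℝ) (Tα : ℝ → ℝ)
    (hcont : ContinuousOn Tα (Set.Icc 0 1))
    (hdy : ∀ n k : ℕ, k ≤ 2^n → Tα ((k:ℝ)/2^n) = Tdy α n k) :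
    (∀ p ∈ Set.Icc (0:ℝ) (1/2),
      (1/2) * (Tα (2 * p) - f2 (2 * p) * binEnt α) = Tα p - f2 p * binEnt α) ∧
    ((∀ p ∈ Set.Icc (1/2 : ℝ) 1, Tα p ≥ f2 p * binEnt α) →
      ∀ p ∈ Set.Icc (0:ℝ) 1, Tα p ≥ f2 p * binEnt α) := by
  have hgap : ∀ p ∈ Set.Icc (0 : ℝ) (1 / 2),
      1 / 2 * (Tα (2 * p) - f2 (2 * p) * binEnt α) = Tα p - f2 p * binEnt α := by
    intro p hp
    rw [f2_two_mul, self_similarity_of_dyadic hcont hdy hp]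
    ring
  refine ⟨hgap, fun hupper p hp => ?_⟩
  exact sub_nonneg.1 <| nonneg_of_half_two_mul hgap (fun q hq => sub_nonneg.2 (hupper q hq)) p hp

/-- The gap halves under doubling:
`(1/2)(T_α(2p) - f(2p)H(α)) = T_α(p) - f(p)H(α)` for `p ∈ [0,1/2]`; consequently,
to prove `T_α(p) ≥ f(p)H(α)` on `[0,1]` it suffices to prove it on `[1/2,1]`. -/
theorem gap_halves (α : ℝ) (hα : α ∈ Set.Ioo (0:ℝ) (1/2)) (Tα : ℝ → ℝ)
    (hcont : ContinuousOn Tα (Set.Icc 0 1))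
    (hdy : ∀ n k : ℕ, k ≤ 2^n → Tα ((k:ℝ)/2^n) = Tdy α n k) :
    (∀ p ∈ Set.Icc (0:ℝ) (1/2),
      (1/2) * (Tα (2 * p) - f2 (2 * p) * binEnt α) = Tα p - f2 p * binEnt α) ∧
    ((∀ p ∈ Set.Icc (1/2 : ℝ) 1, Tα p ≥ f2 p * binEnt α) →
      ∀ p ∈ Set.Icc (0:ℝ) 1, Tα p ≥ f2 p * binEnt α) :=
  gap_halves_general α Tα hcont hdy
end

section
/- Decomposition of a lex function on n+1 inputs: if b is the lex function on n+1 inputs with Pr\{b(X^{n+1})=0\} = (2k+1)/2^{n+1}, and b_-, b_+ are the lex functions on n inputs with Pr\{b_-(X^n)=0\} = k/2^n and Pr\{b_+(X^n)=0\} = (k+1)/2^n, then Pr\{b(X^{n+1})=0 \mid Y^{n+1}\} = Pr\{X_{n+1}=0 \mid Y_{n+1}\} Pr\{b_+(X_1^n)=0 \mid Y_1^n\} + Pr\{X_{n+1}=1 \mid Y_{n+1}\} Pr\{b_-(X_1^n)=0 \mid Y_1^n\}. -/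
open Finset

lemma vecVal_snoc {n : ℕ} (x : Fin n → Bool) (b : Bool) :
    vecVal (Fin.snoc x b) = 2 * vecVal x + (if b then 1 else 0) := by
  unfold vecVal
  rw [Fin.sum_univ_castSucc, Finset.mul_sum]
  simp only [Fin.snoc_castSucc, Fin.snoc_last, Fin.coe_castSucc, Fin.val_last]
  congr 1
  · apply Finset.sum_congr rfl
    intro i _
    have : n + 1 - 1 - i.val = (n - 1 - i.val) + 1 := by omega
    rw [this, pow_succ]
    split <;> ring
  · simp

/-- Decomposition of a lex function on `n+1` inputs (coordinate `n+1` least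
significant): if `Pr{b(X^{n+1})=0} = (2k+1)/2^{n+1}`, `b₋, b₊` lex on `n` inputs
with `Pr{b₋=0} = k/2ⁿ`, `Pr{b₊=0} = (k+1)/2ⁿ`, then for every `y^{n+1}`,
`Pr{b=0 ∣ Y^{n+1}} = Pr{X_{n+1}=0 ∣ Y_{n+1}}·Pr{b₊(X₁ⁿ)=0 ∣ Y₁ⁿ}
 + Pr{X_{n+1}=1 ∣ Y_{n+1}}·Pr{b₋(X₁ⁿ)=0 ∣ Y₁ⁿ}`. -/
theorem lex_decomposition (n : ℕ) (α : ℝ) (hα : α ∈ Set.Icc (0:ℝ) (1/2))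
    (k : ℕ) (hk : k + 1 ≤ 2^n) (y : Fin (n+1) → Bool) :
    condP (n+1) α (lexFun (n+1) (2*k+1)) y =
      (if y (Fin.last n) = false then 1 - α else α) *
        condP n α (lexFun n (k+1)) (fun i => y i.castSucc) +
      (if y (Fin.last n) = true then 1 - α else α) *
        condP n α (lexFun n k) (fun i => y i.castSucc) := by
  have hsum : ∀ f : (Fin (n+1) → Bool) → ℝ,
      ∑ x : Fin (n+1) → Bool, f x = ∑ p : Bool × (Fin n → Bool), f (Fin.snoc p.2 p.1) := by
    intro f
    exact ((Fin.snocEquiv (fun _ => Bool)).sum_comp f).symm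
  have inner : ∀ (b : Bool) (k' : ℕ),
      (∀ v : ℕ, 2*v + (if b then 1 else 0) < 2*k+1 ↔ v < k') →
      (∑ x : Fin n → Bool,
        if lexFun (n+1) (2*k+1) (Fin.snoc x b) = false then jointP (n+1) α (Fin.snoc x b) y else 0)
      = (1/2) * (if b = y (Fin.last n) then 1-α else α) *
          pBY n α (lexFun n k') false (fun i => y i.castSucc) := by
    intro b k' hiff
    unfold pBY
    rw [Finset.mul_sum]
    apply Finset.sum_congr rfl
    intro x _
    have hlex : (lexFun (n+1) (2*k+1) (Fin.snoc x b) = false) = (lexFun n k' x = false) := by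
      simp only [lexFun, decide_eq_false_iff_not, not_le, vecVal_snoc]
      exact propext (hiff (vecVal x))
    have hjoint : jointP (n+1) α (Fin.snoc x b) y =
        (1/2) * (if b = y (Fin.last n) then 1-α else α) * jointP n α x (fun i => y i.castSucc) := by
      unfold jointP
      rw [Fin.prod_univ_castSucc]
      simp only [Fin.snoc_castSucc, Fin.snoc_last]
      ring
    simp only [hlex, hjoint]
    split <;> ring
  have h1 : ∀ v : ℕ, 2*v + (if true then 1 else 0) < 2*k+1 ↔ v < k := by
    intro v; show 2*v + 1 < 2*k+1 ↔ v < k; omega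
  have h2 : ∀ v : ℕ, 2*v + (if false then 1 else 0) < 2*k+1 ↔ v < k+1 := by
    intro v; show 2*v + 0 < 2*k+1 ↔ v < k+1; omega
  conv_lhs => rw [condP, pBY]
  rw [hsum, Fintype.sum_prod_type, Fintype.sum_bool, inner true k h1, inner false (k+1) h2]
  simp only [condP]
  cases hy : y (Fin.last n) <;> simp [hy] <;> ring
end
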